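/- Let R be a ring with identity. Then the undirected graph APOḠ(R) is connected with diam(APOḠ(R)) ≤ 3 (any two distinct vertices are joined by a path of length at most 3). Moreover, if APOḠ(R) contains a cycle, then its girth is at most 4. -/

import Mathlib

open scoped Pointwise

/-- `I` is a left ideal of the ring `R`: an additive subgroup with `R·I ⊆ I`. -/
def IsLeftIdeal (R : Type*) [Ring R] (I : AddSubgroup R) : Prop :=
  ∀ r : R, ∀ x ∈ I, r * x ∈ I

/-- `I` is a right ideal of the ring `R`: an additive subgroup with `I·R ⊆ I`. -/
def IsRightIdeal (R : Type*) [Ring R] (I : AddSubgroup R) : Prop :=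
  ∀ r : R, ∀ x ∈ I, x * r ∈ I

/-- `I` is a one-sided (left or right) ideal of `R`. -/
def IsOneSidedIdeal (R : Type*) [Ring R] (I : AddSubgroup R) : Prop :=
  IsLeftIdeal R I ∨ IsRightIdeal R I

/-- `IPO(R)`: the set of all products `I*J` of two one-sided ideals of `R`.
Here `I * J` is the additive subgroup generated by `{a*b : a ∈ I, b ∈ J}`
(the pointwise product of additive subgroups). -/
def IPO (R : Type*) [Ring R] : Set (AddSubgroup R) :=
  {A | ∃ I J : AddSubgroup R, IsOneSidedIdeal R I ∧ IsOneSidedIdeal R J ∧ A = I * J}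

/-- `A` is a vertex of `APOG(R) = Γ(IPO(R))`: a nonzero element of `IPO(R)` that is a
one-sided zero-divisor of the semigroup `IPO(R)`. -/
def APOGVertex (R : Type*) [Ring R] (A : AddSubgroup R) : Prop :=
  A ∈ IPO R ∧ A ≠ ⊥ ∧ ∃ B ∈ IPO R, B ≠ ⊥ ∧ (A * B = ⊥ ∨ B * A = ⊥)

/-- The directed edge `A → B` of `APOG(R)`: both are vertices, `A ≠ B` and `A*B = 0`. -/
def APOGEdge (R : Type*) [Ring R] (A B : AddSubgroup R) : Prop :=
  APOGVertex R A ∧ APOGVertex R B ∧ A ≠ B ∧ A * B = ⊥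

/-- The undirected graph `APOḠ(R) = Γ̄(IPO(R))` on the vertex set of `APOG(R)`:
distinct vertices `A, B` are adjacent iff `A*B = 0` or `B*A = 0`. -/
def apogGraph (R : Type*) [Ring R] : SimpleGraph {A : AddSubgroup R // APOGVertex R A} where
  Adj A B := A ≠ B ∧ ((A : AddSubgroup R) * B = ⊥ ∨ (B : AddSubgroup R) * A = ⊥)
  symm := by constructor; rintro A B ⟨hAB, h⟩; exact ⟨hAB.symm, h.symm⟩
  loopless := by constructor; rintro A ⟨h, -⟩; exact h rfl

/-!
`IPO(R)` is closed under products and contains `R = ⊤`. Given vertices `u`, `v` and nonzero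
`a`, `b ∈ IPO(R)` annihilating them, one of the products `a v`, `a b`, `b a`, `v a` (according to
the sides on which `a` and `b` annihilate) either vanishes or is a vertex, and in both cases it
yields a path of length at most `3` from `u` to `v`.

For the girth, suppose a shortest cycle has length `n ≥ 5` and run around it periodically,
`y : ℤ → APOḠ(R)`. Without cycles of length `3` and `4`, a nonzero element of `IPO(R)`
annihilating `y i` and `y (i + 2)` must be `y (i + 1)`. Applied to products of the `y j`, this
first forces all edges to be oriented alike (`y i * y (i + 1) = 0` for all `i`, after reversing
the cycle if necessary); then each `y (i + 1) * y i` equals `y i` or `y (i + 1)`, and every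
pattern of three consecutive such equalities produces a zero product between vertices at distance
`2` or `3` on the cycle, that is, a short cycle.
-/

namespace AddSubgroup

variable {R : Type*} [Ring R]

instance semigroup : Semigroup (AddSubgroup R) :=
  toAddSubmonoid_injective.semigroup _ mul_toAddSubmonoid

protected theorem mul_le {M N P : AddSubgroup R} : M * N ≤ P ↔ ∀ m ∈ M, ∀ n ∈ N, m * n ∈ P :=
  AddSubmonoid.mul_le

protected theorem mul_mem_mul {M N : AddSubgroup R} {m n : R} (hm : m ∈ M) (hn : n ∈ N) :
    m * n ∈ M * N :=
  AddSubmonoid.mul_mem_mul hm hn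

protected theorem mul_le_mul {M N P Q : AddSubgroup R} (hMP : M ≤ P) (hNQ : N ≤ Q) :
    M * N ≤ P * Q :=
  AddSubmonoid.mul_le_mul (M := M.toAddSubmonoid) hMP hNQ

@[simp] protected theorem mul_bot (M : AddSubgroup R) : M * ⊥ = ⊥ :=
  toAddSubmonoid_injective (AddSubmonoid.mul_bot _)

@[simp] protected theorem bot_mul (M : AddSubgroup R) : ⊥ * M = ⊥ :=
  toAddSubmonoid_injective (AddSubmonoid.bot_mul _)

end AddSubgroup

section IPO

variable {R : Type*} [Ring R]

theorem IsLeftIdeal.top_mul_eq {I : AddSubgroup R} (h : IsLeftIdeal R I) : ⊤ * I = I :=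
  le_antisymm (AddSubgroup.mul_le.2 fun r _ x hx => h r x hx)
    fun x hx => by simpa using AddSubgroup.mul_mem_mul (AddSubgroup.mem_top 1) hx

theorem IsRightIdeal.mul_top_eq {I : AddSubgroup R} (h : IsRightIdeal R I) : I * ⊤ = I :=
  le_antisymm (AddSubgroup.mul_le.2 fun x hx r _ => h r x hx)
    fun x hx => by simpa using AddSubgroup.mul_mem_mul hx (AddSubgroup.mem_top 1)

theorem isLeftIdeal_top : IsLeftIdeal R ⊤ := fun _ _ _ => trivial

theorem isLeftIdeal_top_mul (X : AddSubgroup R) : IsLeftIdeal R (⊤ * X) := fun r x hx => by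
  simpa [← mul_assoc, isLeftIdeal_top.top_mul_eq] using
    AddSubgroup.mul_mem_mul (AddSubgroup.mem_top r) hx

theorem isRightIdeal_mul_top (X : AddSubgroup R) : IsRightIdeal R (X * ⊤) := fun r x hx => by
  simpa [mul_assoc, isLeftIdeal_top.top_mul_eq] using
    AddSubgroup.mul_mem_mul hx (AddSubgroup.mem_top r)

theorem top_mem_IPO : (⊤ : AddSubgroup R) ∈ IPO R :=
  ⟨⊤, ⊤, .inl isLeftIdeal_top, .inl isLeftIdeal_top, isLeftIdeal_top.top_mul_eq.symm⟩

theorem mul_mem_IPO {A B : AddSubgroup R} (hA : A ∈ IPO R) (hB : B ∈ IPO R) :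
    A * B ∈ IPO R := by
  obtain ⟨I, J, hI, -, rfl⟩ := hA
  obtain ⟨K, L, -, hL | hL, rfl⟩ := hB
  · refine ⟨I * J * K * ⊤, L, .inr (isRightIdeal_mul_top _), .inl hL, ?_⟩
    rw [mul_assoc _ ⊤, hL.top_mul_eq]
    simp only [mul_assoc]
  rcases hI with hI | hI
  · refine ⟨⊤ * (I * J * K), L, .inl (isLeftIdeal_top_mul _), .inr hL, ?_⟩
    simp only [← mul_assoc, hI.top_mul_eq]
  · refine ⟨I, ⊤ * (J * K * L), .inr hI, .inl (isLeftIdeal_top_mul _), ?_⟩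
    simp only [← mul_assoc, hI.mul_top_eq]

theorem apogVertex_of_mul_eq_bot {A Z : AddSubgroup R} (hA : APOGVertex R A) (hZ : Z ∈ IPO R)
    (hZ0 : Z ≠ ⊥) (h : Z * A = ⊥ ∨ A * Z = ⊥) : APOGVertex R Z :=
  ⟨hZ, hZ0, A, hA.1, hA.2.1, h⟩

end IPO

namespace SimpleGraph

variable {α : Type*} {G : SimpleGraph α} {a b c d : α}

theorem not_adj_of_adj_of_adj (hG : 3 < G.egirth) (hab : G.Adj a b) (hbc : G.Adj b c) :
    ¬ G.Adj c a := fun hca => by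
  have hw : (Walk.cons hab (.cons hbc (.cons hca .nil))).IsCycle := by
    simp [Walk.cons_isCycle_iff, hab.ne, hbc.ne, hca.ne, hab.ne', hca.ne']
  exact hG.not_ge (egirth_le_length hw)

theorem eq_of_adj_of_adj_of_adj_of_adj (hG : 4 < G.egirth) (hac : a ≠ c) (hab : G.Adj a b)
    (hbc : G.Adj b c) (had : G.Adj a d) (hdc : G.Adj d c) : b = d := by
  by_contra hbd
  have hw : (Walk.cons hab (.cons hbc (.cons hdc.symm (.cons had.symm .nil)))).IsCycle := by
    simp [Walk.cons_isCycle_iff, hab.ne, hbc.ne, had.ne, hab.ne', hdc.ne', had.ne', hac,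
      hac.symm, hbd]
  exact hG.not_ge (egirth_le_length hw)

structure IsLocallyInjectiveWalk (G : SimpleGraph α) (y : ℤ → α) : Prop where
  adj (i : ℤ) : G.Adj (y i) (y (i + 1))
  ne_add_two (i : ℤ) : y i ≠ y (i + 2)
  ne_add_three (i : ℤ) : y i ≠ y (i + 3)

namespace IsLocallyInjectiveWalk

variable {y : ℤ → α}

theorem adj_of_eq (hy : G.IsLocallyInjectiveWalk y) {i j : ℤ} (hij : j = i + 1) :
    G.Adj (y i) (y j) :=
  hij ▸ hy.adj i

theorem ne (hy : G.IsLocallyInjectiveWalk y) {i j : ℤ}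
    (hij : j = i + 2 ∨ j = i + 3 ∨ i = j + 2 ∨ i = j + 3) : y i ≠ y j := by
  rcases hij with rfl | rfl | rfl | rfl
  exacts [hy.ne_add_two i, hy.ne_add_three i, (hy.ne_add_two j).symm, (hy.ne_add_three j).symm]

theorem not_adj (hy : G.IsLocallyInjectiveWalk y) (hG : 4 < G.egirth) {i j : ℤ}
    (hij : j = i + 2 ∨ j = i + 3 ∨ i = j + 2 ∨ i = j + 3) : ¬ G.Adj (y i) (y j) := by
  wlog hji : j = i + 2 ∨ j = i + 3 generalizing i j
  · exact fun h => this (by omega) (by omega) h.symm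
  have h3 : 3 < G.egirth := lt_of_le_of_lt (by norm_num) hG
  rcases hji with rfl | rfl
  · exact fun h => not_adj_of_adj_of_adj h3 (hy.adj i) (hy.adj_of_eq (by ring)) h.symm
  · exact fun h => hy.ne (i := i + 1) (j := i + 3) (by omega) <|
      eq_of_adj_of_adj_of_adj_of_adj hG (hy.ne_add_two i) (hy.adj i) (hy.adj_of_eq (by ring)) h
        (hy.adj_of_eq (by ring)).symm

theorem comp_neg (hy : G.IsLocallyInjectiveWalk y) :
    G.IsLocallyInjectiveWalk fun i => y (-i) where
  adj i := (hy.adj_of_eq (by ring)).symm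
  ne_add_two i := hy.ne (by omega)
  ne_add_three i := hy.ne (by omega)

end IsLocallyInjectiveWalk

theorem Walk.IsCycle.isLocallyInjectiveWalk {u : α} {w : G.Walk u u} (hw : w.IsCycle)
    (h4 : 4 ≤ w.length) :
    G.IsLocallyInjectiveWalk fun i : ℤ => w.getVert (i % w.length).toNat := by
  set n := w.length
  have hn : (0 : ℤ) < n := by omega
  have hmod (i : ℤ) : 0 ≤ i % n ∧ i % n < n :=
    ⟨Int.emod_nonneg _ hn.ne', Int.emod_lt_of_pos _ hn⟩
  have hne (i k : ℤ) (hk : 0 < k ∧ k < n) :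
      w.getVert (i % n).toNat ≠ w.getVert ((i + k) % n).toNat := fun h => by
    have := hmod i
    have := hmod (i + k)
    have := hw.getVert_injOn' (by simp; omega) (by simp; omega) h
    have hik : i ≡ i + k [ZMOD n] := by unfold Int.ModEq; omega
    have := Int.le_of_dvd hk.1 (by simpa using hik.dvd)
    omega
  refine ⟨fun i => ?_, fun i => hne i 2 (by omega), fun i => hne i 3 (by omega)⟩
  have := hmod i
  have hsucc := w.adj_getVert_succ (i := (i % n).toNat) (by omega)
  rw [← Int.emod_add_emod]
  by_cases hlt : i % n + 1 < n
  · rwa [Int.emod_eq_of_lt (by omega) hlt, show (i % n + 1).toNat = (i % n).toNat + 1 by omega]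
  · rw [show (i % n).toNat + 1 = n by omega, w.getVert_length] at hsucc
    rwa [show i % n + 1 = n by omega, Int.emod_self, Int.toNat_zero, w.getVert_zero]

end SimpleGraph

namespace apogGraph

open SimpleGraph

variable {R : Type*} [Ring R]

local notation "V" => {A : AddSubgroup R // APOGVertex R A}

theorem edist_le_one_of_mul_eq_bot {u v : V} (h : u.1 * v.1 = ⊥ ∨ v.1 * u.1 = ⊥) :
    (apogGraph R).edist u v ≤ 1 :=
  edist_le_one_iff_adj_or_eq.2 (or_iff_not_imp_right.2 fun huv => ⟨huv, h⟩)

theorem edist_le_three (u v : V) : (apogGraph R).edist u v ≤ 3 := by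
  have path2 (x : V) (hux : u.1 * x.1 = ⊥ ∨ x.1 * u.1 = ⊥)
      (hxv : x.1 * v.1 = ⊥ ∨ v.1 * x.1 = ⊥) :
      (apogGraph R).edist u v ≤ 3 := calc
    _ ≤ (apogGraph R).edist u x + (apogGraph R).edist x v := SimpleGraph.edist_triangle
    _ ≤ 1 + 1 := add_le_add (edist_le_one_of_mul_eq_bot hux) (edist_le_one_of_mul_eq_bot hxv)
    _ ≤ 3 := by norm_num
  have path3 (x y : V) (hux : u.1 * x.1 = ⊥ ∨ x.1 * u.1 = ⊥)
      (hxy : x.1 * y.1 = ⊥ ∨ y.1 * x.1 = ⊥) (hyv : y.1 * v.1 = ⊥ ∨ v.1 * y.1 = ⊥) :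
      (apogGraph R).edist u v ≤ 3 := calc
    _ ≤ (apogGraph R).edist u x + (apogGraph R).edist x y + (apogGraph R).edist y v :=
      SimpleGraph.edist_triangle.trans (add_le_add_left SimpleGraph.edist_triangle _)
    _ ≤ 1 + 1 + 1 := add_le_add (add_le_add (edist_le_one_of_mul_eq_bot hux)
        (edist_le_one_of_mul_eq_bot hxy)) (edist_le_one_of_mul_eq_bot hyv)
    _ = 3 := by norm_num
  obtain ⟨-, -, A, hA, hA0, hAu⟩ := u.2
  obtain ⟨-, -, B, hB, hB0, hBv⟩ := v.2
  have ha := apogVertex_of_mul_eq_bot u.2 hA hA0 hAu.symm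
  have hb := apogVertex_of_mul_eq_bot v.2 hB hB0 hBv.symm
  rcases hAu with hA' | hA' <;> rcases hBv with hB' | hB'
  · by_cases hZ : A * v.1 = ⊥
    · exact path2 ⟨A, ha⟩ (.inl hA') (.inl hZ)
    · exact path3 ⟨_, apogVertex_of_mul_eq_bot hb (mul_mem_IPO hA v.2.1) hZ
        (.inl (by simp [mul_assoc, hB']))⟩ ⟨B, hb⟩ (.inl (by simp [← mul_assoc, hA']))
        (.inl (by simp [mul_assoc, hB'])) (.inr hB')
  · by_cases hZ : A * B = ⊥
    · exact path3 ⟨A, ha⟩ ⟨B, hb⟩ (.inl hA') (.inl hZ) (.inl hB')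
    · exact path2 ⟨_, apogVertex_of_mul_eq_bot v.2 (mul_mem_IPO hA hB) hZ
        (.inl (by simp [mul_assoc, hB']))⟩ (.inl (by simp [← mul_assoc, hA']))
        (.inl (by simp [mul_assoc, hB']))
  · by_cases hZ : B * A = ⊥
    · exact path3 ⟨A, ha⟩ ⟨B, hb⟩ (.inr hA') (.inr hZ) (.inr hB')
    · exact path2 ⟨_, apogVertex_of_mul_eq_bot u.2 (mul_mem_IPO hB hA) hZ
        (.inl (by simp [mul_assoc, hA']))⟩ (.inr (by simp [mul_assoc, hA']))
        (.inr (by simp [← mul_assoc, hB']))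
  · by_cases hZ : v.1 * A = ⊥
    · exact path2 ⟨A, ha⟩ (.inr hA') (.inr hZ)
    · exact path3 ⟨_, apogVertex_of_mul_eq_bot u.2 (mul_mem_IPO v.2.1 hA) hZ
        (.inl (by simp [mul_assoc, hA']))⟩ ⟨B, hb⟩ (.inr (by simp [mul_assoc, hA']))
        (.inr (by simp [← mul_assoc, hB'])) (.inl hB')

theorem eq_or_eq_of_mul_eq_bot (hG : 3 < (apogGraph R).egirth) {u v : V}
    (huv : (apogGraph R).Adj u v) {Z : AddSubgroup R} (hZ : Z ∈ IPO R) (hZ0 : Z ≠ ⊥)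
    (hu : Z * u.1 = ⊥ ∨ u.1 * Z = ⊥) (hv : Z * v.1 = ⊥ ∨ v.1 * Z = ⊥) : Z = u.1 ∨ Z = v.1 := by
  by_contra! hne
  let z : V := ⟨Z, apogVertex_of_mul_eq_bot u.2 hZ hZ0 hu⟩
  exact not_adj_of_adj_of_adj hG huv (c := z)
    ⟨fun h => hne.2 (congrArg Subtype.val h).symm, hv.symm⟩
    ⟨fun h => hne.1 (congrArg Subtype.val h), hu⟩

theorem eq_of_mul_eq_bot (hG : 4 < (apogGraph R).egirth) {u v w : V} (huw : u ≠ w)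
    (huv : (apogGraph R).Adj u v) (hvw : (apogGraph R).Adj v w) {Z : AddSubgroup R}
    (hZ : Z ∈ IPO R) (hZ0 : Z ≠ ⊥) (hu : Z * u.1 = ⊥ ∨ u.1 * Z = ⊥)
    (hw : Z * w.1 = ⊥ ∨ w.1 * Z = ⊥) : Z = v.1 := by
  have h3 : 3 < (apogGraph R).egirth := lt_of_le_of_lt (by norm_num) hG
  let z : V := ⟨Z, apogVertex_of_mul_eq_bot u.2 hZ hZ0 hu⟩
  have hzu : z ≠ u := fun h => not_adj_of_adj_of_adj h3 huv hvw
    ⟨huw.symm, congrArg Subtype.val h ▸ hw.symm⟩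
  have hzw : z ≠ w := fun h => not_adj_of_adj_of_adj h3 huv hvw
    ⟨huw.symm, congrArg Subtype.val h ▸ hu⟩
  exact (congrArg Subtype.val
    (eq_of_adj_of_adj_of_adj_of_adj hG huw huv hvw ⟨hzu.symm, hu.symm⟩ ⟨hzw, hw⟩)).symm

section Walk

variable {y : ℤ → {A : AddSubgroup R // APOGVertex R A}}

theorem walk_mul_ne_bot (hG : 4 < (apogGraph R).egirth)
    (hy : (apogGraph R).IsLocallyInjectiveWalk y) {i j : ℤ}
    (hij : j = i + 2 ∨ j = i + 3 ∨ i = j + 2 ∨ i = j + 3) : (y i).1 * (y j).1 ≠ ⊥ :=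
  fun h => hy.not_adj hG hij ⟨hy.ne hij, .inl h⟩

theorem walk_eq_of_mul_eq_bot (hG : 4 < (apogGraph R).egirth)
    (hy : (apogGraph R).IsLocallyInjectiveWalk y) (i : ℤ)
    {Z : AddSubgroup R} (hZ : Z ∈ IPO R) (hZ0 : Z ≠ ⊥) (h₀ : Z * (y i).1 = ⊥ ∨ (y i).1 * Z = ⊥)
    (h₂ : Z * (y (i + 2)).1 = ⊥ ∨ (y (i + 2)).1 * Z = ⊥) : Z = (y (i + 1)).1 :=
  eq_of_mul_eq_bot hG (hy.ne (by omega)) (hy.adj i) (hy.adj_of_eq (by ring)) hZ hZ0 h₀ h₂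

theorem walk_mul_add_two_ne_bot (hG : 4 < (apogGraph R).egirth)
    (hy : (apogGraph R).IsLocallyInjectiveWalk y) (i : ℤ)
    (h : (y (i + 1)).1 * (y i).1 = ⊥) : (y (i + 1)).1 * (y (i + 2)).1 ≠ ⊥ := by
  intro h'
  have key (k : ℤ) (hk : k = i + 3 ∨ k = i + 4) : (y k).1 * (y (i + 1)).1 = (y (i + 1)).1 :=
    walk_eq_of_mul_eq_bot hG hy i (mul_mem_IPO (y k).2.1 (y (i + 1)).2.1)
      (walk_mul_ne_bot hG hy (by omega)) (.inl (by simp [mul_assoc, h]))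
      (.inl (by simp [mul_assoc, h']))
  apply (y (i + 1)).2.2.1
  rcases (hy.adj_of_eq (i := i + 3) (j := i + 4) (by ring)).2 with h34 | h43
  · rw [← key (i + 3) (.inl rfl), ← key (i + 4) (.inr rfl), ← mul_assoc, h34,
      AddSubgroup.bot_mul]
  · rw [← key (i + 4) (.inr rfl), ← key (i + 3) (.inl rfl), ← mul_assoc, h43,
      AddSubgroup.bot_mul]

theorem walk_mul_add_one_ne_bot (hG : 4 < (apogGraph R).egirth)
    (hy : (apogGraph R).IsLocallyInjectiveWalk y) (i : ℤ)
    (h : (y i).1 * (y (i + 1)).1 = ⊥) : (y (i + 2)).1 * (y (i + 1)).1 ≠ ⊥ := by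
  intro h'
  have key (k : ℤ) (hk : k = i + 3 ∨ k = i + 4) : (y (i + 1)).1 * (y k).1 = (y (i + 1)).1 :=
    walk_eq_of_mul_eq_bot hG hy i (mul_mem_IPO (y (i + 1)).2.1 (y k).2.1)
      (walk_mul_ne_bot hG hy (by omega)) (.inr (by simp [← mul_assoc, h]))
      (.inr (by simp [← mul_assoc, h']))
  apply (y (i + 1)).2.2.1
  rcases (hy.adj_of_eq (i := i + 3) (j := i + 4) (by ring)).2 with h34 | h43
  · rw [← key (i + 4) (.inr rfl), ← key (i + 3) (.inl rfl), mul_assoc, h34,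
      AddSubgroup.mul_bot]
  · rw [← key (i + 3) (.inl rfl), ← key (i + 4) (.inr rfl), mul_assoc, h43,
      AddSubgroup.mul_bot]

theorem walk_forall_mul_eq_bot_or (hG : 4 < (apogGraph R).egirth)
    (hy : (apogGraph R).IsLocallyInjectiveWalk y) :
    (∀ i, (y i).1 * (y (i + 1)).1 = ⊥) ∨ (∀ i, (y (i + 1)).1 * (y i).1 = ⊥) := by
  have step (i : ℤ) :
      ((y i).1 * (y (i + 1)).1 = ⊥ ↔ (y (i + 1)).1 * (y (i + 1 + 1)).1 = ⊥) ∧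
      ((y (i + 1)).1 * (y i).1 = ⊥ ↔ (y (i + 1 + 1)).1 * (y (i + 1)).1 = ⊥) := by
    have hI := walk_mul_add_two_ne_bot hG hy i
    have hI' := walk_mul_add_one_ne_bot hG hy i
    rw [show i + 1 + 1 = i + 2 by ring]
    rcases (hy.adj i).2 with h | h <;>
      rcases (hy.adj_of_eq (i := i + 1) (j := i + 2) (by ring)).2 with h' | h' <;>
      tauto
  suffices ∀ i, ((y i).1 * (y (i + 1)).1 = ⊥ ↔ (y 0).1 * (y (0 + 1)).1 = ⊥) ∧
      ((y (i + 1)).1 * (y i).1 = ⊥ ↔ (y (0 + 1)).1 * (y 0).1 = ⊥) by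
    rcases (hy.adj 0).2 with h | h
    exacts [.inl fun i => (this i).1.2 h, .inr fun i => (this i).2.2 h]
  intro i
  induction i with
  | zero => simp
  | succ k ih => rwa [← (step k).1, ← (step k).2]
  | pred k ih =>
    rw [(step _).1, (step _).2]
    simpa using ih

theorem walk_mul_ne_left (hG : 4 < (apogGraph R).egirth)
    (hy : (apogGraph R).IsLocallyInjectiveWalk y) (i : ℤ) (h₀ : (y i).1 * (y (i + 1)).1 = ⊥)
    (h₁ : (y (i + 1)).1 * (y (i + 2)).1 = ⊥) (h₂ : (y (i + 2)).1 * (y (i + 3)).1 = ⊥)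
    (hL : (y (i + 1)).1 * (y i).1 = (y i).1) : (y (i + 2)).1 * (y (i + 1)).1 ≠ (y (i + 2)).1 := by
  intro hR
  have hsq : (y (i + 2)).1 * (y (i + 2)).1 = ⊥ := calc
    _ = (y (i + 2)).1 * (y (i + 1)).1 * (y (i + 2)).1 := by rw [hR]
    _ = ⊥ := by simp [mul_assoc, h₁]
  have hW0 : (y (i + 1)).1 * ⊤ * (y (i + 2)).1 ≠ ⊥ := fun hW =>
    walk_mul_ne_bot hG hy (i := i) (j := i + 2) (by omega) <| le_bot_iff.1 <| calc
      _ = (y (i + 1)).1 * (y i).1 * (y (i + 2)).1 := by rw [hL]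
      _ ≤ (y (i + 1)).1 * ⊤ * (y (i + 2)).1 :=
        AddSubgroup.mul_le_mul (AddSubgroup.mul_le_mul le_rfl le_top) le_rfl
      _ = ⊥ := hW
  have hW : (y (i + 1)).1 * ⊤ * (y (i + 2)).1 = (y (i + 1)).1 :=
    walk_eq_of_mul_eq_bot hG hy i
      (mul_mem_IPO (mul_mem_IPO (y (i + 1)).2.1 top_mem_IPO) (y (i + 2)).2.1) hW0
      (.inr (by simp [← mul_assoc, h₀])) (.inl (by simp [mul_assoc, hsq]))
  apply walk_mul_ne_bot hG hy (i := i + 1) (j := i + 3) (by omega)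
  rw [← hW]
  simp [mul_assoc, h₂]

theorem walk_not_forall_mul_eq_bot (hG : 4 < (apogGraph R).egirth)
    (hy : (apogGraph R).IsLocallyInjectiveWalk y) : ¬ ∀ i, (y i).1 * (y (i + 1)).1 = ⊥ := by
  intro hF
  have hB (i : ℤ) : (y (i + 1)).1 * (y i).1 ≠ ⊥ := fun h =>
    walk_mul_add_two_ne_bot hG hy i h (by simpa [add_assoc] using hF (i + 1))
  have hD (i : ℤ) :
      (y (i + 1)).1 * (y i).1 = (y i).1 ∨ (y (i + 1)).1 * (y i).1 = (y (i + 1)).1 :=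
    eq_or_eq_of_mul_eq_bot (lt_of_le_of_lt (by norm_num) hG) (hy.adj i)
      (mul_mem_IPO (y (i + 1)).2.1 (y i).2.1) (hB i) (.inr (by simp [← mul_assoc, hF i]))
      (.inl (by simp [mul_assoc, hF i]))
  have hLL {a b c : AddSubgroup R} (hba : b * a = a) (hcb : c * b = b) (hbc : b * c = ⊥) :
      b * a = ⊥ := by
    have hca : c * a = a := by rw [← hba, ← mul_assoc, hcb]
    rw [← hca, ← mul_assoc, hbc, AddSubgroup.bot_mul]
  have hRR {a b c : AddSubgroup R} (hba : b * a = b) (hcb : c * b = c) (hab : a * b = ⊥) :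
      c * b = ⊥ := by
    have hca : c * a = c := by rw [← hcb, mul_assoc, hba]
    rw [← hca, mul_assoc, hab, AddSubgroup.mul_bot]
  rcases hD 0 with h₀ | h₀ <;> rcases hD 1 with h₁ | h₁
  · exact hB 0 (hLL h₀ h₁ (hF 1))
  · exact walk_mul_ne_left hG hy 0 (hF 0) (hF 1) (hF 2) h₀ h₁
  · rcases hD 2 with h₂ | h₂
    · exact hB 1 (hLL h₁ h₂ (hF 2))
    · exact walk_mul_ne_left hG hy 1 (hF 1) (hF 2) (hF 3) h₁ h₂
  · exact hB 1 (hRR h₀ h₁ (hF 0))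

theorem not_isLocallyInjectiveWalk (hG : 4 < (apogGraph R).egirth) :
    ¬ (apogGraph R).IsLocallyInjectiveWalk y := fun hy =>
  (walk_forall_mul_eq_bot_or hG hy).elim (walk_not_forall_mul_eq_bot hG hy) fun hB =>
    walk_not_forall_mul_eq_bot hG hy.comp_neg fun i => by
      simpa using hB (-(i + 1))

end Walk

theorem girth_le_four (h : ¬ (apogGraph R).IsAcyclic) : (apogGraph R).girth ≤ 4 := by
  obtain ⟨u, w, hw, hlen⟩ := exists_egirth_eq_length.2 h
  have hgirth : (apogGraph R).girth = w.length := by simp [girth, hlen]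
  by_contra! hg
  exact not_isLocallyInjectiveWalk (by rw [hlen]; exact_mod_cast hgirth ▸ hg)
    (hw.isLocallyInjectiveWalk (by omega))

end apogGraph

/-- `APOḠ(R)` is connected with diameter at most `3`; moreover, if it
contains a cycle then its girth is at most `4`. -/
theorem apogGraph_connected_diam_girth (R : Type*) [Ring R] :
    (apogGraph R).Preconnected ∧
    (∀ A B : {A : AddSubgroup R // APOGVertex R A}, (apogGraph R).dist A B ≤ 3) ∧
    (¬ (apogGraph R).IsAcyclic → (apogGraph R).girth ≤ 4) :=
  ⟨fun u v => SimpleGraph.reachable_of_edist_ne_top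
      (ne_top_of_le_ne_top (by decide) (apogGraph.edist_le_three u v)),
    fun u v => ENat.toNat_le_of_le_natCast (apogGraph.edist_le_three u v),
    apogGraph.girth_le_four⟩
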